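/- In the quantized enveloping algebra U_h(sl_2), for all m, n ≥ 0, one has e^m f^n = ∑_{p=0}^{min(m,n)} q^{p(p+1)/2 - nm} · {p}_q! · [m choose p]_q · [n choose p]_q · f^{n-p} {H - m - n + 2p}_{q,p} e^{m-p}, where e = v^{-1}(q-1)E, f = (q-1)FK, {H+j}_q = q^j K^2 - 1, and {H+i}_{q,p} = {H+i}_q {H+i-1}_q ⋯ {H+i-p+1}_q. -/

import Mathlib

open PowerSeries Finset
open scoped TensorProduct

noncomputable section

/-- The base ring `ℚ[[h]]`. -/
abbrev R : Type := PowerSeries ℚ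

/-- `v = exp(h/2) ∈ ℚ[[h]]`. -/
def vexp : R := PowerSeries.rescale (2⁻¹ : ℚ) (PowerSeries.exp ℚ)

/-- `{i}_q = q^i - 1`. -/
def qI (Q : Rˣ) (i : ℤ) : R := ((Q ^ i : Rˣ) : R) - 1

/-- `{i}_{q,n}`. -/
def qPoch (Q : Rˣ) (i : ℤ) (n : ℕ) : R := ∏ k ∈ range n, qI Q (i - k)

/-- `{n}_q!`. -/
def qFact (Q : Rˣ) (n : ℕ) : R := qPoch Q n n

variable {A : Type} [Ring A] [Algebra R A]

/-- `e = v⁻¹(q-1)E`. -/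
def ee (V : Rˣ) (E : A) : A := (((V⁻¹ : Rˣ) : R) * (((V ^ 2 : Rˣ) : R) - 1)) • E

/-- `f = (q-1)FK`. -/
def ff (V : Rˣ) (K : Aˣ) (F : A) : A := (((V ^ 2 : Rˣ) : R) - 1) • (F * (K : A))

/-- `{H+i}_{q,p} = ∏_{k<p} (q^{i-k}K² - 1)`. -/
def HPoch (Q : Rˣ) (K : Aˣ) (i : ℤ) (p : ℕ) : A :=
  ((List.range p).map (fun k => ((Q ^ (i - k) : Rˣ) : R) • ((K : A) * (K : A)) - 1)).prod

/-- The scalars `q^z`, `z ∈ ℤ`, inside `A` (so that `ℤ[q,q⁻¹]`-subalgebras can be described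
as subrings containing them). -/
def scalarsQ (Q : Rˣ) : Set A := {x | ∃ z : ℤ, x = algebraMap R A ((Q ^ z : Rˣ) : R)}

/-- The `ℤ[q,q⁻¹]`-subalgebra `U̅_q^{ev}` generated by `K²,K⁻²,e,f`. -/
def UbarEv (V : Rˣ) (K : Aˣ) (E F : A) : Subring A :=
  Subring.closure
    (({(K : A) * (K : A), ((K⁻¹ : Aˣ) : A) * ((K⁻¹ : Aˣ) : A), ee V E, ff V K F} : Set A)
      ∪ scalarsQ (V ^ 2))

/-- The `ℤ[q,q⁻¹]`-subalgebra `U_{ℤ,q}` generated by `K^{±1}` and the divided powers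
`Ẽ^{(n)}, F̃^{(n)}` (given as functions `Et, Ft`). -/
def UZq (V : Rˣ) (K : Aˣ) (Et Ft : ℕ → A) : Subring A :=
  Subring.closure
    ((({(K : A), ((K⁻¹ : Aˣ) : A)} : Set A) ∪ Set.range Et ∪ Set.range Ft)
      ∪ scalarsQ (V ^ 2))

/-- The left adjoint action `a ▷ b = ∑ a' b S(a'')`. -/
def adAct (Δ : A →ₐ[R] A ⊗[R] A) (S : A →ₗ[R] A) (a b : A) : A :=
  TensorProduct.lift ((LinearMap.mul R A).compl₂ ((LinearMap.mulLeft R b) ∘ₗ S)) (Δ a)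

/-- The two-sided ideal of the subring `Sg` generated by a subset `X ⊆ Sg`. -/
def idealIn (Sg : Subring A) (X : Set A) : AddSubgroup A :=
  AddSubgroup.closure {z | ∃ u ∈ Sg, ∃ x ∈ X, ∃ w ∈ Sg, z = u * x * w}

/-! Induction on `n`. Multiplying the expansion of `e^m f^n` on the right by `f`, the factor `f`
moves through `e^(m-p)` by
  `e^(t+1) f = q^(-t-1) f e^(t+1) + q^(-t) {t+1}_q {H-t}_q e^t`
(itself proved by induction on `t` from `e f = q⁻¹ f e + {1}_q {H}_q`), and through
`{H+i}_{q,p}` at the cost of the shift `i ↦ i - 2`. The `{H+j}_q` commute and are affine in `K²`,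
so collecting the terms with `f^(n-p)` reduces the induction step to two scalar identities for the
coefficients; these are the two q-Pascal rules for `[n choose p]_q`. They follow from the defining
relation `{p}_q! [i choose p]_q = {i}_{q,p}` because `q = exp h` is not a root of unity, so that
`{p}_q! ≠ 0`. -/

section QNumbers

variable (Q : Rˣ)

def qpow (a : ℤ) : R := ((Q ^ a : Rˣ) : R)

lemma qpow_zero : qpow Q 0 = 1 := by simp [qpow]

lemma qpow_one : qpow Q 1 = Q := by simp [qpow]

lemma qpow_neg_one : qpow Q (-1) = ((Q⁻¹ : Rˣ) : R) := by simp [qpow]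

lemma qpow_add (a b : ℤ) : qpow Q (a + b) = qpow Q a * qpow Q b := by
  simp [qpow, zpow_add]

lemma qI_eq_qpow_sub_one (i : ℤ) : qI Q i = qpow Q i - 1 := rfl

lemma qI_zero : qI Q 0 = 0 := by simp [qI]

lemma qI_add (a b : ℤ) : qI Q (a + b) = qpow Q a * qI Q b + qI Q a := by
  simp only [qI_eq_qpow_sub_one, qpow_add]
  ring

lemma qPoch_zero (i : ℤ) : qPoch Q i 0 = 1 := prod_range_zero _

lemma qPoch_succ (i : ℤ) (p : ℕ) : qPoch Q i (p + 1) = qPoch Q i p * qI Q (i - p) :=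
  prod_range_succ _ _

lemma qPoch_succ' (i : ℤ) (p : ℕ) : qPoch Q i (p + 1) = qI Q i * qPoch Q (i - 1) p := by
  simp only [qPoch, prod_range_succ', Nat.cast_zero, sub_zero, Nat.cast_succ,
    sub_add_eq_sub_sub_swap]
  ring

lemma qFact_zero : qFact Q 0 = 1 := qPoch_zero Q 0

lemma qFact_succ (p : ℕ) : qFact Q (p + 1) = qI Q (p + 1) * qFact Q p := by
  rw [qFact, qPoch_succ', Nat.cast_succ, add_sub_cancel_right, qFact]

lemma qPoch_add_one_succ (i : ℤ) (s : ℕ) :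
    qPoch Q (i + 1) (s + 1) = qpow Q (s + 1) * qPoch Q i (s + 1) + qI Q (s + 1) * qPoch Q i s := by
  rw [qPoch_succ', add_sub_cancel_right, qPoch_succ,
    show i + 1 = (s + 1 : ℤ) + (i - s) by ring, qI_add]
  ring

lemma qPoch_add_one_succ' (i : ℤ) (s : ℕ) :
    qPoch Q (i + 1) (s + 1) = qPoch Q i (s + 1) + qpow Q (i - s) * qI Q (s + 1) * qPoch Q i s := by
  rw [qPoch_succ', add_sub_cancel_right, qPoch_succ,
    show i + 1 = (i - s) + (s + 1 : ℤ) by ring, qI_add]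
  ring

end QNumbers

def IsQBinomial (Q : Rˣ) (qbin : ℤ → ℕ → R) : Prop :=
  ∀ (i : ℤ) (n : ℕ), qFact Q n * qbin i n = qPoch Q i n

section QBinomial

variable {Q : Rˣ} {qbin : ℤ → ℕ → R}

lemma IsQBinomial.zero_right (hqbin : IsQBinomial Q qbin) (i : ℤ) : qbin i 0 = 1 := by
  simpa [qFact_zero, qPoch_zero] using hqbin i 0

lemma IsQBinomial.natCast_eq_zero_of_lt (hqbin : IsQBinomial Q qbin) (hfact : ∀ n, qFact Q n ≠ 0)
    {n p : ℕ} (h : n < p) : qbin n p = 0 := by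
  refine (mul_eq_zero.mp ((hqbin n p).trans ?_)).resolve_left (hfact p)
  exact prod_eq_zero (mem_range.mpr h) (by rw [sub_self, qI_zero])

lemma IsQBinomial.succ_succ (hqbin : IsQBinomial Q qbin) (hfact : ∀ n, qFact Q n ≠ 0)
    (i : ℤ) (s : ℕ) : qbin (i + 1) (s + 1) = qpow Q (s + 1) * qbin i (s + 1) + qbin i s := by
  apply mul_left_cancel₀ (hfact (s + 1))
  linear_combination hqbin (i + 1) (s + 1) + qPoch_add_one_succ Q i s
    - qpow Q (s + 1) * hqbin i (s + 1) - qI Q (s + 1) * hqbin i s - qbin i s * qFact_succ Q s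

lemma IsQBinomial.succ_succ' (hqbin : IsQBinomial Q qbin) (hfact : ∀ n, qFact Q n ≠ 0)
    (i : ℤ) (s : ℕ) : qbin (i + 1) (s + 1) = qbin i (s + 1) + qpow Q (i - s) * qbin i s := by
  apply mul_left_cancel₀ (hfact (s + 1))
  linear_combination hqbin (i + 1) (s + 1) + qPoch_add_one_succ' Q i s - hqbin i (s + 1)
    - qpow Q (i - s) * qI Q (s + 1) * hqbin i s - qpow Q (i - s) * qbin i s * qFact_succ Q s

lemma IsQBinomial.qI_mul_succ (hqbin : IsQBinomial Q qbin) (hfact : ∀ n, qFact Q n ≠ 0)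
    (i : ℤ) (s : ℕ) : qI Q (s + 1) * qbin i (s + 1) = qI Q (i - s) * qbin i s := by
  apply mul_left_cancel₀ (hfact (s + 1))
  linear_combination qI Q (s + 1) * hqbin i (s + 1) + qI Q (s + 1) * qPoch_succ Q i s
    - qI Q (i - s) * qI Q (s + 1) * hqbin i s - qI Q (i - s) * qbin i s * qFact_succ Q s

end QBinomial

lemma vexp_pow (m : ℕ) : vexp ^ m = rescale ((m : ℚ) / 2) (exp ℚ) := by
  rw [vexp, ← map_pow, exp_pow_eq_rescale_exp, rescale_rescale]
  ring_nf

lemma vexp_pow_ne_one {m : ℕ} (hm : m ≠ 0) : vexp ^ m ≠ 1 := by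
  intro h
  have h1 := congrArg (coeff 1) h
  simp [vexp_pow, coeff_rescale, coeff_exp] at h1
  exact hm h1

lemma qpow_sq_ne_one_of_eq_vexp {V : Rˣ} (hV : (V : R) = vexp) {z : ℤ} (hz : z ≠ 0) :
    qpow (V ^ 2) z ≠ 1 := by
  intro h
  have hnat : V ^ (2 * z.natAbs) = 1 := by
    rw [pow_mul, pow_natAbs_eq_one]
    exact Units.ext h
  apply vexp_pow_ne_one (m := 2 * z.natAbs) (by omega)
  rw [← hV, ← Units.val_pow_eq_pow_val, hnat, Units.val_one]

lemma qFact_sq_ne_zero_of_eq_vexp {V : Rˣ} (hV : (V : R) = vexp) (n : ℕ) :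
    qFact (V ^ 2) n ≠ 0 := by
  unfold qFact qPoch
  refine prod_ne_zero_iff.mpr fun k hk => sub_ne_zero.mpr ?_
  exact qpow_sq_ne_one_of_eq_vexp hV (by simp only [mem_range] at hk; omega)

def commCoeff (Q : Rˣ) (qbin : ℤ → ℕ → R) (m n p : ℕ) : R :=
  qpow Q (((p * (p + 1) / 2 : ℕ) : ℤ) - (n * m : ℤ)) * qFact Q p * qbin m p * qbin n p

lemma natCast_triangle_succ (p : ℕ) :
    (((p + 1) * (p + 1 + 1) / 2 : ℕ) : ℤ) = ((p * (p + 1) / 2 : ℕ) : ℤ) + p + 1 := by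
  rw [show (p + 1) * (p + 1 + 1) = p * (p + 1) + (p + 1) * 2 by ring,
    Nat.add_mul_div_right _ _ two_pos]
  push_cast
  ring

section Coefficients
variable {Q : Rˣ} {qbin : ℤ → ℕ → R}

lemma commCoeff_zero (hqbin : IsQBinomial Q qbin) (m n : ℕ) :
    commCoeff Q qbin m n 0 = qpow Q (-(n * m)) := by
  simp [commCoeff, hqbin.zero_right, qFact_zero]

lemma commCoeff_eq_zero_of_lt_left (hqbin : IsQBinomial Q qbin) (hfact : ∀ n, qFact Q n ≠ 0)
    {m n p : ℕ} (h : m < p) : commCoeff Q qbin m n p = 0 := by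
  simp [commCoeff, hqbin.natCast_eq_zero_of_lt hfact h]

lemma commCoeff_eq_zero_of_lt_right (hqbin : IsQBinomial Q qbin) (hfact : ∀ n, qFact Q n ≠ 0)
    {m n p : ℕ} (h : n < p) : commCoeff Q qbin m n p = 0 := by
  simp [commCoeff, hqbin.natCast_eq_zero_of_lt hfact h]

lemma qFact_succ_mul_qbin (hqbin : IsQBinomial Q qbin) (hfact : ∀ n, qFact Q n ≠ 0)
    (i : ℤ) (p : ℕ) :
    qFact Q (p + 1) * qbin i (p + 1) = qI Q (i - p) * (qFact Q p * qbin i p) := by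
  rw [qFact_succ, mul_right_comm, hqbin.qI_mul_succ hfact]
  ring

lemma commCoeff_succ_succ (hqbin : IsQBinomial Q qbin) (hfact : ∀ n, qFact Q n ≠ 0)
    (m n p : ℕ) :
    commCoeff Q qbin m (n + 1) (p + 1) =
      qpow Q (p + 1 - m) * commCoeff Q qbin m n (p + 1) +
        qpow Q (p + 1 - m) * qI Q (m - p) * commCoeff Q qbin m n p := by
  simp only [commCoeff, natCast_triangle_succ, Nat.cast_add, Nat.cast_one,
    hqbin.succ_succ hfact]
  set T : ℤ := ((p * (p + 1) / 2 : ℕ) : ℤ)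
  have e₁ : qpow Q (T + p + 1 - (n + 1) * m) = qpow Q (p + 1 - m) * qpow Q (T - n * m) := by
    rw [← qpow_add]; ring_nf
  have e₂ : qpow Q (T + p + 1 - n * m) = qpow Q (p + 1) * qpow Q (T - n * m) := by
    rw [← qpow_add]; ring_nf
  rw [e₁, e₂]
  linear_combination qpow Q (p + 1 - m) * qpow Q (T - n * m) * qbin n p *
    qFact_succ_mul_qbin hqbin hfact m p

lemma commCoeff_succ_succ_mul_qpow (hqbin : IsQBinomial Q qbin) (hfact : ∀ n, qFact Q n ≠ 0)
    (m n p : ℕ) :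
    commCoeff Q qbin m (n + 1) (p + 1) * qpow Q (-m - n + 2 * p + 1) =
      qpow Q (p + 1 - m) * commCoeff Q qbin m n (p + 1) * qpow Q (-m - n + p) +
        qpow Q (p + 1 - m) * qI Q (m - p) * commCoeff Q qbin m n p * qpow Q (p + 1 - m) := by
  simp only [commCoeff, natCast_triangle_succ, Nat.cast_add, Nat.cast_one,
    hqbin.succ_succ' hfact]
  set T : ℤ := ((p * (p + 1) / 2 : ℕ) : ℤ)
  have e₁ : qpow Q (T + p + 1 - (n + 1) * m) = qpow Q (p + 1 - m) * qpow Q (T - n * m) := by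
    rw [← qpow_add]; ring_nf
  have e₂ : qpow Q (T + p + 1 - n * m) = qpow Q (p + 1) * qpow Q (T - n * m) := by
    rw [← qpow_add]; ring_nf
  have e₃ : qpow Q (-m - n + 2 * p + 1) = qpow Q (p + 1) * qpow Q (-m - n + p) := by
    rw [← qpow_add]; ring_nf
  have e₄ : qpow Q (n - p) * qpow Q (-m - n + 2 * p + 1) = qpow Q (p + 1 - m) := by
    rw [← qpow_add]; ring_nf
  rw [e₁, e₂]
  linear_combination
    qpow Q (p + 1 - m) * qpow Q (T - n * m) * qFact Q (p + 1) * qbin m (p + 1) *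
        (qbin n (p + 1) * e₃ + qbin n p * e₄) +
      qpow Q (p + 1 - m) ^ 2 * qpow Q (T - n * m) * qbin n p * qFact_succ_mul_qbin hqbin hfact m p

end Coefficients

section Commutation

-- The paper's `{H+j}_q`, with `q^H` read as `K²`.
def qIH (Q : Rˣ) (K : Aˣ) (j : ℤ) : A := qpow Q j • ((K : A) * K) - 1

variable {Q : Rˣ} {K : Aˣ}

-- `HPoch` multiplies over `List.range p` coerced to `List ℤ`, i.e. over a `List.flatMap`.
lemma HPoch_eq_prod (i : ℤ) (p : ℕ) :
    HPoch Q K i p = ((List.range p).map fun t : ℕ => qIH Q K (i - t)).prod := by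
  simp only [HPoch, List.bind_eq_flatMap, List.pure_def, ← List.map_eq_flatMap, List.map_map]
  rfl

lemma HPoch_zero (i : ℤ) : HPoch Q K i 0 = 1 := by
  simp [HPoch_eq_prod]

lemma HPoch_succ (i : ℤ) (p : ℕ) : HPoch Q K i (p + 1) = HPoch Q K i p * qIH Q K (i - p) := by
  simp only [HPoch_eq_prod, List.prod_range_succ]

lemma HPoch_succ' (i : ℤ) (p : ℕ) : HPoch Q K i (p + 1) = qIH Q K i * HPoch Q K (i - 1) p := by
  simp only [HPoch_eq_prod, List.prod_range_succ', Nat.cast_zero, sub_zero, Nat.cast_succ,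
    sub_add_eq_sub_sub_swap]

lemma qIH_commute (a b : ℤ) : Commute (qIH Q K a) (qIH Q K b) :=
  ((((Commute.refl _).smul_left _).smul_right _).sub_left (Commute.one_left _)).sub_right
    (Commute.one_right _)

lemma HPoch_commute_qIH (i : ℤ) (p : ℕ) (j : ℤ) : Commute (HPoch Q K i p) (qIH Q K j) := by
  rw [HPoch_eq_prod]
  exact Commute.list_prod_left _ _ fun x hx => by
    obtain ⟨t, -, rfl⟩ := List.mem_map.mp hx
    exact qIH_commute _ _

lemma smul_qIH_eq_add {c₁ c₂ c₃ : R} {j₁ j₂ j₃ : ℤ} (h : c₁ = c₂ + c₃)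
    (hK : c₁ * qpow Q j₁ = c₂ * qpow Q j₂ + c₃ * qpow Q j₃) :
    c₁ • qIH Q K j₁ = c₂ • qIH Q K j₂ + c₃ • qIH Q K j₃ := by
  simp only [qIH, smul_sub, smul_smul, hK, add_smul]
  rw [h, add_smul]
  abel

lemma K_sq_mul {x : A} {a : ℤ} (h : (K : A) * x = qpow Q a • (x * K)) :
    (K : A) * K * x = qpow Q (a + a) • (x * (K * K)) := by
  rw [mul_assoc, h, mul_smul_comm, ← mul_assoc, h, smul_mul_assoc, smul_smul, qpow_add,
    mul_assoc]

variable {e f : A}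

structure UqRelations (Q : Rˣ) (K : Aˣ) (e f : A) : Prop where
  K_mul_e : (K : A) * e = (Q : R) • (e * K)
  K_mul_f : (K : A) * f = ((Q⁻¹ : Rˣ) : R) • (f * K)
  e_mul_f : e * f = ((Q⁻¹ : Rˣ) : R) • (f * e) + ((Q : R) - 1) • ((K : A) * K - 1)

lemma e_mul_qIH (hKe : (K : A) * e = (Q : R) • (e * K)) (j : ℤ) :
    e * qIH Q K j = qIH Q K (j - 2) * e := by
  rw [← qpow_one] at hKe
  simp only [qIH, mul_sub, sub_mul, mul_one, one_mul, smul_mul_assoc, K_sq_mul hKe, smul_smul,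
    mul_smul_comm, ← qpow_add]
  ring_nf

lemma qIH_mul_f (hKf : (K : A) * f = ((Q⁻¹ : Rˣ) : R) • (f * K)) (j : ℤ) :
    qIH Q K j * f = f * qIH Q K (j - 2) := by
  rw [← qpow_neg_one] at hKf
  simp only [qIH, mul_sub, sub_mul, mul_one, one_mul, smul_mul_assoc, K_sq_mul hKf, smul_smul,
    mul_smul_comm, ← qpow_add]
  ring_nf

lemma HPoch_mul_f (hKf : (K : A) * f = ((Q⁻¹ : Rˣ) : R) • (f * K)) (i : ℤ) (p : ℕ) :
    HPoch Q K i p * f = f * HPoch Q K (i - 2) p := by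
  induction p with
  | zero => simp [HPoch_zero]
  | succ p ih =>
    rw [HPoch_succ, mul_assoc, qIH_mul_f hKf, ← mul_assoc, ih, mul_assoc, HPoch_succ,
      sub_right_comm]

lemma e_pow_succ_mul_f (hrel : UqRelations Q K e f) (t : ℕ) :
    e ^ (t + 1) * f = qpow Q (-(t + 1)) • (f * e ^ (t + 1)) +
      (qpow Q (-t) * qI Q (t + 1)) • (qIH Q K (-t) * e ^ t) := by
  have hef' : e * f = qpow Q (-1) • (f * e) + qI Q 1 • qIH Q K 0 := by
    simpa [qpow_neg_one, qpow_zero, qI, qIH] using hrel.e_mul_f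
  induction t with
  | zero => simpa [qpow_zero] using hef'
  | succ t ih =>
    have hcomb : (qpow Q (-(t + 1)) * qI Q 1) • qIH Q K 0 +
        (qpow Q (-t) * qI Q (t + 1)) • qIH Q K (-t - 2) =
        (qpow Q (-(t + 1)) * qI Q (t + 1 + 1)) • qIH Q K (-(t + 1)) := by
      refine (smul_qIH_eq_add ?_ ?_).symm <;>
      · simp only [qI_eq_qpow_sub_one, mul_sub, sub_mul, mul_one, ← qpow_add]
        ring_nf
    rw [pow_succ' e (t + 1), mul_assoc, ih, mul_add, mul_smul_comm, mul_smul_comm, ← mul_assoc,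
      hef', ← mul_assoc, e_mul_qIH hrel.K_mul_e]
    push_cast
    rw [← smul_mul_assoc _ (qIH Q K _), ← hcomb, show -((t : ℤ) + 1 + 1) = -(t + 1) + -1 by ring,
      qpow_add]
    simp only [add_mul, smul_mul_assoc, mul_assoc, ← pow_succ', smul_add, smul_smul, add_assoc]

-- At `t = 0` the truncated `t - 1` is harmless: its coefficient `{0}_q` vanishes.
lemma e_pow_mul_f (hrel : UqRelations Q K e f) (t : ℕ) :
    e ^ t * f = qpow Q (-t) • (f * e ^ t) +
      (qpow Q (1 - t) * qI Q t) • (qIH Q K (1 - t) * e ^ (t - 1)) := by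
  cases t with
  | zero => simp [qpow_zero, qI_zero]
  | succ t =>
    rw [e_pow_succ_mul_f hrel]
    push_cast
    ring_nf

end Commutation

section Expansion
variable {Q : Rˣ} {qbin : ℤ → ℕ → R} {K : Aˣ} {e f : A}

lemma commCoeff_succ_succ_smul_qIH (hqbin : IsQBinomial Q qbin) (hfact : ∀ n, qFact Q n ≠ 0)
    (m n p : ℕ) :
    commCoeff Q qbin m (n + 1) (p + 1) • qIH Q K (-m - n + 2 * p + 1) =
      (qpow Q (p + 1 - m) * commCoeff Q qbin m n (p + 1)) • qIH Q K (-m - n + p) +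
        (qpow Q (p + 1 - m) * qI Q (m - p) * commCoeff Q qbin m n p) • qIH Q K (p + 1 - m) :=
  smul_qIH_eq_add (commCoeff_succ_succ hqbin hfact m n p)
    (commCoeff_succ_succ_mul_qpow hqbin hfact m n p)

lemma commCoeff_smul_mul_f (hqbin : IsQBinomial Q qbin) (hfact : ∀ n, qFact Q n ≠ 0)
    (hrel : UqRelations Q K e f)
    {m n p : ℕ} (hpn : p ≤ n) :
    commCoeff Q qbin m n p • (f ^ (n - p) * HPoch Q K (-m - n + 2 * p) p * e ^ (m - p)) * f =
      (qpow Q (p - m) * commCoeff Q qbin m n p) •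
          (f ^ (n + 1 - p) * HPoch Q K (-m - n + 2 * p - 2) p * e ^ (m - p)) +
        (qpow Q (p + 1 - m) * qI Q (m - p) * commCoeff Q qbin m n p) •
          (f ^ (n - p) * HPoch Q K (-m - n + 2 * p) p * qIH Q K (p + 1 - m) *
            e ^ (m - (p + 1))) := by
  rcases le_or_gt p m with hpm | hpm
  · rw [smul_mul_assoc, mul_assoc _ (e ^ _), e_pow_mul_f hrel, Nat.cast_sub hpm]
    simp only [mul_add, mul_smul_comm, smul_add, smul_smul, ← mul_assoc]
    rw [mul_assoc (f ^ (n - p)), HPoch_mul_f hrel.K_mul_f, ← mul_assoc, ← pow_succ, Nat.sub_sub,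
      show n - p + 1 = n + 1 - p by omega, neg_sub, sub_sub_eq_add_sub, add_comm 1 (p : ℤ)]
    ring_nf
  · simp [commCoeff_eq_zero_of_lt_left hqbin hfact hpm]

lemma commCoeff_succ_succ_smul (hqbin : IsQBinomial Q qbin) (hfact : ∀ n, qFact Q n ≠ 0)
    (m n p : ℕ) :
    commCoeff Q qbin m (n + 1) (p + 1) •
        (f ^ (n - p) * HPoch Q K (-m - (n + 1) + 2 * (p + 1)) (p + 1) * e ^ (m - (p + 1))) =
      (qpow Q (p + 1 - m) * commCoeff Q qbin m n (p + 1)) •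
          (f ^ (n - p) * HPoch Q K (-m - n + 2 * (p + 1) - 2) (p + 1) * e ^ (m - (p + 1))) +
        (qpow Q (p + 1 - m) * qI Q (m - p) * commCoeff Q qbin m n p) •
          (f ^ (n - p) * HPoch Q K (-m - n + 2 * p) p * qIH Q K (p + 1 - m) *
            e ^ (m - (p + 1))) := by
  rw [show -(m : ℤ) - (n + 1) + 2 * (p + 1) = -m - n + 2 * p + 1 by ring, HPoch_succ',
    add_sub_cancel_right, show -(m : ℤ) - n + 2 * (p + 1) - 2 = -m - n + 2 * p by ring,
    HPoch_succ, show -(m : ℤ) - n + 2 * p - p = -m - n + p by ring,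
    ← (HPoch_commute_qIH _ _ _).eq]
  calc _ = f ^ (n - p) * (HPoch Q K (-m - n + 2 * p) p *
        ((commCoeff Q qbin m (n + 1) (p + 1) • qIH Q K (-m - n + 2 * p + 1)) *
          e ^ (m - (p + 1)))) := by
        simp only [smul_mul_assoc, mul_smul_comm, mul_assoc]
    _ = _ := by
        rw [commCoeff_succ_succ_smul_qIH hqbin hfact]
        simp only [add_mul, mul_add, smul_mul_assoc, mul_smul_comm, mul_assoc]

lemma e_pow_mul_f_pow (hqbin : IsQBinomial Q qbin) (hfact : ∀ n, qFact Q n ≠ 0)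
    (hrel : UqRelations Q K e f) (m n : ℕ) :
    e ^ m * f ^ n = ∑ p ∈ range (n + 1),
      commCoeff Q qbin m n p • (f ^ (n - p) * HPoch Q K (-m - n + 2 * p) p * e ^ (m - p)) := by
  induction n with
  | zero => simp [commCoeff_zero hqbin, HPoch_zero, qpow_zero]
  | succ n ih =>
    let a : ℕ → A := fun p => (qpow Q (p - m) * commCoeff Q qbin m n p) •
      (f ^ (n + 1 - p) * HPoch Q K (-m - n + 2 * p - 2) p * e ^ (m - p))
    let b : ℕ → A := fun p => (qpow Q (p + 1 - m) * qI Q (m - p) * commCoeff Q qbin m n p) •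
      (f ^ (n - p) * HPoch Q K (-m - n + 2 * p) p * qIH Q K (p + 1 - m) * e ^ (m - (p + 1)))
    have ha_last : a (n + 1) = 0 := by
      simp [a, commCoeff_eq_zero_of_lt_right hqbin hfact (lt_add_one n)]
    calc e ^ m * f ^ (n + 1) = ∑ p ∈ range (n + 1), (a p + b p) := by
          rw [pow_succ, ← mul_assoc, ih, sum_mul]
          exact sum_congr rfl fun p hp =>
            commCoeff_smul_mul_f hqbin hfact hrel (mem_range_succ_iff.mp hp)
      _ = ∑ p ∈ range (n + 1), (a (p + 1) + b p) + a 0 := by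
          rw [sum_add_distrib, sum_add_distrib, sum_range_succ' a, sum_range_succ (a ·.succ),
            ha_last, add_zero, add_right_comm]
      _ = _ := by
          rw [sum_range_succ' _ (n + 1)]
          congr 1
          · refine sum_congr rfl fun p _ => ?_
            simp only [a, b, Nat.add_sub_add_right]
            push_cast
            exact (commCoeff_succ_succ_smul (K := K) (e := e) (f := f) hqbin hfact m n p).symm
          · simp [a, commCoeff_zero hqbin, HPoch_zero, ← qpow_add]
            ring_nf

end Expansion

section Uh
variable {V : Rˣ} {K : Aˣ} {E F : A}

lemma K_mul_ee (hKE : (K : A) * E = ((V ^ 2 : Rˣ) : R) • (E * (K : A))) :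
    (K : A) * ee V E = ((V ^ 2 : Rˣ) : R) • (ee V E * K) := by
  rw [ee, mul_smul_comm, hKE, smul_mul_assoc, smul_comm]

lemma K_mul_ff (hKF : (K : A) * F = (((V ^ 2)⁻¹ : Rˣ) : R) • (F * (K : A))) :
    (K : A) * ff V K F = (((V ^ 2)⁻¹ : Rˣ) : R) • (ff V K F * K) := by
  rw [ff, mul_smul_comm, ← mul_assoc, hKF, smul_mul_assoc, smul_comm, smul_mul_assoc]

lemma ee_mul_ff
    (hEF : ((V : R) - ((V⁻¹ : Rˣ) : R)) • (E * F - F * E) = (K : A) - ((K⁻¹ : Aˣ) : A))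
    (hKE : (K : A) * E = ((V ^ 2 : Rˣ) : R) • (E * (K : A))) :
    ee V E * ff V K F = (((V ^ 2)⁻¹ : Rˣ) : R) • (ff V K F * ee V E) +
      (((V ^ 2 : Rˣ) : R) - 1) • ((K : A) * K - 1) := by
  have hc : ((V⁻¹ : Rˣ) : R) * (((V ^ 2 : Rˣ) : R) - 1) = (V : R) - ((V⁻¹ : Rˣ) : R) := by
    simp [mul_sub, sq, ← mul_assoc]
  have hq : (((V ^ 2)⁻¹ : Rˣ) : R) * ((V ^ 2 : Rˣ) : R) = 1 := Units.inv_mul _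
  have hee_ff : ee V E * ff V K F =
      (((V ^ 2 : Rˣ) : R) - 1) • (((V⁻¹ : Rˣ) : R) * (((V ^ 2 : Rˣ) : R) - 1)) • (E * F * K) := by
    rw [ee, ff, smul_mul_assoc, mul_smul_comm, smul_comm, ← mul_assoc]
  have hff_ee : (((V ^ 2)⁻¹ : Rˣ) : R) • (ff V K F * ee V E) =
      (((V ^ 2 : Rˣ) : R) - 1) • (((V⁻¹ : Rˣ) : R) * (((V ^ 2 : Rˣ) : R) - 1)) • (F * E * K) := by
    rw [ff, ee, smul_mul_assoc, mul_smul_comm, mul_assoc F, hKE, mul_smul_comm, ← mul_assoc F E]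
    simp only [smul_smul]
    congr 1
    linear_combination (((V ^ 2 : Rˣ) : R) - 1) ^ 2 * ((V⁻¹ : Rˣ) : R) * hq
  rw [hee_ff, hff_ee, ← sub_eq_iff_eq_add', ← smul_sub, ← smul_sub, ← sub_mul, ← smul_mul_assoc,
    hc, hEF, sub_mul, Units.inv_mul]

end Uh

theorem stmt1_general
    (V : Rˣ) (hV : (V : R) = vexp) (K : Aˣ) (E F : A)
    (hEF : ((V : R) - ((V⁻¹ : Rˣ) : R)) • (E * F - F * E) = (K : A) - ((K⁻¹ : Aˣ) : A))
    (hKE : (K : A) * E = ((V ^ 2 : Rˣ) : R) • (E * (K : A)))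
    (hKF : (K : A) * F = (((V ^ 2)⁻¹ : Rˣ) : R) • (F * (K : A)))
    (qbin : ℤ → ℕ → R)
    (hqbin : ∀ (i : ℤ) (n : ℕ), qFact (V ^ 2) n * qbin i n = qPoch (V ^ 2) i n)
    (m n : ℕ) :
    (ee V E) ^ m * (ff V K F) ^ n =
      ∑ p ∈ range (min m n + 1),
        ((((V ^ 2) ^ (((p * (p + 1) / 2 : ℕ) : ℤ) - (n * m : ℤ)) : Rˣ) : R) *
            qFact (V ^ 2) p * qbin (m : ℤ) p * qbin (n : ℤ) p) •
          ((ff V K F) ^ (n - p) *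
            HPoch (V ^ 2) K (-(m : ℤ) - (n : ℤ) + 2 * (p : ℤ)) p * (ee V E) ^ (m - p)) := by
  have hfact := qFact_sq_ne_zero_of_eq_vexp hV
  have hrel : UqRelations (V ^ 2) K (ee V E) (ff V K F) :=
    ⟨K_mul_ee hKE, K_mul_ff hKF, ee_mul_ff hEF hKE⟩
  rw [e_pow_mul_f_pow hqbin hfact hrel m n]
  refine (sum_subset (range_subset_range.mpr (by omega)) fun p hpn hpm => ?_).symm
  rw [mem_range] at hpn hpm
  rw [commCoeff_eq_zero_of_lt_left hqbin hfact (by omega), zero_smul]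

theorem stmt1
    (V : Rˣ) (hV : (V : R) = vexp) (K : Aˣ) (E F H : A)
    (hHE : H * E - E * H = 2 * E) (hHF : H * F - F * H = -(2 * F))
    (hEF : ((V : R) - ((V⁻¹ : Rˣ) : R)) • (E * F - F * E) = (K : A) - ((K⁻¹ : Aˣ) : A))
    (hKE : (K : A) * E = ((V ^ 2 : Rˣ) : R) • (E * (K : A)))
    (hKF : (K : A) * F = (((V ^ 2)⁻¹ : Rˣ) : R) • (F * (K : A)))
    (hKH : (K : A) * H = H * (K : A))
    (qbin : ℤ → ℕ → R)
    (hqbin : ∀ (i : ℤ) (n : ℕ), qFact (V ^ 2) n * qbin i n = qPoch (V ^ 2) i n)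
    (m n : ℕ) :
    (ee V E) ^ m * (ff V K F) ^ n =
      ∑ p ∈ range (min m n + 1),
        ((((V ^ 2) ^ (((p * (p + 1) / 2 : ℕ) : ℤ) - (n * m : ℤ)) : Rˣ) : R) *
            qFact (V ^ 2) p * qbin (m : ℤ) p * qbin (n : ℤ) p) •
          ((ff V K F) ^ (n - p) *
            HPoch (V ^ 2) K (-(m : ℤ) - (n : ℤ) + 2 * (p : ℤ)) p * (ee V E) ^ (m - p)) :=
  stmt1_general V hV K E F hEF hKE hKF qbin hqbin m n
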